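/- arXiv:1306.4570 — 5 statements merged into one kernel-verified Lean document; each statement's English description precedes it below -/
import Mathlib

section
/- Let E be a finite-dimensional real inner product space, A : E → E a symmetric (self-adjoint) linear operator, and D ⊆ E a linear subspace with dim D > 1 satisfying the Gauss-invariance condition for A. Then at least one of the following holds: (i) A(D) ⊆ D^⊥; (ii) A(D) ⊆ D; (iii) dim(D ∩ ker A) = dim D − 1. -/
open scoped RealInnerProductSpace

/-!
Suppose `A X₀ ∉ D` for some `X₀ ∈ D`. Whenever `c • A X₀ ∈ D` the scalar `c` must vanish, and
the Gauss condition produces such combinations. Applied to `(X₀, Y, A Y)` it shows that `A Y ∈ D`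
forces `A Y = 0`; applied to `(Y, X₀, Z₀)` for a `Z₀ ∈ D` with `⟪A X₀, Z₀⟫ ≠ 0` it shows that
`⟪A Y, Z₀⟫ = 0` forces `A Y ∈ D`. Hence `D ∩ ker A` is the kernel of the nonzero functional
`Y ↦ ⟪A Y, Z₀⟫` on `D`, of codimension one. If no such `Z₀` exists, the Gauss condition applied to
`(X₀, Y, Z)` gives `⟪A Y, Z⟫ = 0` on `D`, i.e. `A(D) ⊆ Dᗮ`.
-/

theorem Submodule.eq_zero_of_smul_mem {K V : Type*} [DivisionRing K] [AddCommGroup V]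
    [Module K V] {p : Submodule K V} {v : V} (hv : v ∉ p) {c : K} (h : c • v ∈ p) : c = 0 :=
  by_contra fun hc => hv ((p.smul_mem_iff hc).1 h)

theorem Submodule.finrank_inf_ker_add_one {K V W : Type*} [Field K] [AddCommGroup V]
    [Module K V] [AddCommGroup W] [Module K W] (D : Submodule K V) [FiniteDimensional K D]
    (A : V →ₗ[K] W) (g : Module.Dual K W) (hker : ∀ x ∈ D, g (A x) = 0 → A x = 0)
    {x₀ : V} (hx₀ : x₀ ∈ D) (hgx₀ : g (A x₀) ≠ 0) :
    Module.finrank K ↥(D ⊓ LinearMap.ker A) + 1 = Module.finrank K D := by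
  set ψ : Module.Dual K D := g ∘ₗ A ∘ₗ D.subtype
  have hψ : ψ ≠ 0 := fun h => hgx₀ (LinearMap.congr_fun h ⟨x₀, hx₀⟩)
  have hker_ψ : LinearMap.ker ψ = (D ⊓ LinearMap.ker A).comap D.subtype := by
    ext x
    simp only [ψ, LinearMap.mem_ker, LinearMap.comp_apply, Submodule.mem_comap,
      Submodule.mem_inf, Submodule.coe_subtype, SetLike.coe_mem, true_and]
    exact ⟨hker x x.2, fun h => by rw [h, map_zero]⟩
  rw [← Module.Dual.finrank_ker_add_one_of_ne_zero hψ, hker_ψ,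
    (Submodule.comapSubtypeEquivOfLe inf_le_left).finrank_eq]

section GaussInvariant

variable {E : Type*} [NormedAddCommGroup E] [InnerProductSpace ℝ E]

def IsGaussInvariant (A : E →ₗ[ℝ] E) (D : Submodule ℝ E) : Prop :=
  ∀ X ∈ D, ∀ Y ∈ D, ∀ Z ∈ D, ⟪A Y, Z⟫ • A X - ⟪A X, Z⟫ • A Y ∈ D

namespace IsGaussInvariant

variable {A : E →ₗ[ℝ] E} {D : Submodule ℝ E} (hD : IsGaussInvariant A D)
  {X₀ : E} (hX₀ : X₀ ∈ D)
include hD hX₀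

theorem inner_apply_eq_zero_of_inner_eq_zero (hAX₀ : A X₀ ∉ D) {Y Z : E} (hY : Y ∈ D)
    (hZ : Z ∈ D) (hX₀Z : ⟪A X₀, Z⟫ = 0) : ⟪A Y, Z⟫ = 0 := by
  have h := hD X₀ hX₀ Y hY Z hZ
  rw [hX₀Z, zero_smul, sub_zero] at h
  exact Submodule.eq_zero_of_smul_mem hAX₀ h

theorem exists_inner_ne_zero (hAX₀ : A X₀ ∉ D) (hperp : ¬ ∀ x ∈ D, A x ∈ Dᗮ) :
    ∃ Z ∈ D, ⟪A X₀, Z⟫ ≠ 0 := by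
  by_contra! h
  refine hperp fun Y hY => (Submodule.mem_orthogonal' D _).2 fun Z hZ => ?_
  exact hD.inner_apply_eq_zero_of_inner_eq_zero hX₀ hAX₀ hY hZ (h Z hZ)

theorem apply_mem_of_inner_eq_zero {Z₀ : E} (hZ₀ : Z₀ ∈ D) (hX₀Z₀ : ⟪A X₀, Z₀⟫ ≠ 0) {Y : E}
    (hY : Y ∈ D) (hYZ₀ : ⟪A Y, Z₀⟫ = 0) : A Y ∈ D := by
  have h := hD Y hY X₀ hX₀ Z₀ hZ₀
  rw [hYZ₀, zero_smul, sub_zero] at h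
  exact (D.smul_mem_iff hX₀Z₀).1 h

theorem apply_eq_zero_of_apply_mem (hAX₀ : A X₀ ∉ D) {Y : E} (hY : Y ∈ D) (hAY : A Y ∈ D) :
    A Y = 0 := by
  have h := D.add_mem (hD X₀ hX₀ Y hY (A Y) hAY) (D.smul_mem ⟪A X₀, A Y⟫ hAY)
  rw [sub_add_cancel] at h
  exact inner_self_eq_zero.1 (Submodule.eq_zero_of_smul_mem hAX₀ h)

end IsGaussInvariant

end GaussInvariant

theorem curvature_invariant_trichotomy_general
    {E : Type*} [NormedAddCommGroup E] [InnerProductSpace ℝ E]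
    [FiniteDimensional ℝ E] (A : E →ₗ[ℝ] E)
    (D : Submodule ℝ E)
    (hGauss : ∀ X ∈ D, ∀ Y ∈ D, ∀ Z ∈ D,
      ⟪A Y, Z⟫ • A X - ⟪A X, Z⟫ • A Y ∈ D) :
    (∀ x ∈ D, A x ∈ Dᗮ) ∨ (∀ x ∈ D, A x ∈ D) ∨
      Module.finrank ℝ ↥(D ⊓ LinearMap.ker A) = Module.finrank ℝ D - 1 := by
  have hD : IsGaussInvariant A D := hGauss
  by_cases hperp : ∀ x ∈ D, A x ∈ Dᗮ
  · exact Or.inl hperp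
  by_cases hinv : ∀ x ∈ D, A x ∈ D
  · exact Or.inr (Or.inl hinv)
  obtain ⟨X₀, hX₀, hAX₀⟩ := not_forall₂.1 hinv
  obtain ⟨Z₀, hZ₀, hX₀Z₀⟩ := hD.exists_inner_ne_zero hX₀ hAX₀ hperp
  have hcodim := D.finrank_inf_ker_add_one A (innerₛₗ ℝ Z₀)
    (fun Y hY hYZ₀ => hD.apply_eq_zero_of_apply_mem hX₀ hAX₀ hY <|
      hD.apply_mem_of_inner_eq_zero hX₀ hZ₀ hX₀Z₀ hY <| by rwa [real_inner_comm])
    hX₀ (by rwa [innerₛₗ_apply_apply, real_inner_comm])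
  exact Or.inr (Or.inr (by omega))

/-- If a subspace `D` with `dim D > 1` of a finite-dimensional real inner product
space is Gauss-invariant for a symmetric operator `A`, then `A(D) ⊆ D^⊥`,
or `A(D) ⊆ D`, or `dim (D ∩ ker A) = dim D - 1`. -/
theorem curvature_invariant_trichotomy
    {E : Type*} [NormedAddCommGroup E] [InnerProductSpace ℝ E]
    [FiniteDimensional ℝ E] (A : E →ₗ[ℝ] E)
    (hA : ∀ u v : E, ⟪A u, v⟫ = ⟪u, A v⟫)
    (D : Submodule ℝ E) (hdim : 1 < Module.finrank ℝ D)
    (hGauss : ∀ X ∈ D, ∀ Y ∈ D, ∀ Z ∈ D,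
      ⟪A Y, Z⟫ • A X - ⟪A X, Z⟫ • A Y ∈ D) :
    (∀ x ∈ D, A x ∈ Dᗮ) ∨ (∀ x ∈ D, A x ∈ D) ∨
      Module.finrank ℝ ↥(D ⊓ LinearMap.ker A) = Module.finrank ℝ D - 1 :=
  curvature_invariant_trichotomy_general A D hGauss
end

section
/- Let E be a finite-dimensional real inner product space, A : E → E a symmetric (self-adjoint) linear operator that is injective, and D ⊆ E a linear subspace with dim D > 1 satisfying the Gauss-invariance condition for A. Then A(D) ⊆ D or A(D) ⊆ D^⊥. -/
open scoped RealInnerProductSpace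

/-!
Where the bilinear form `⟪A x, z⟫` vanishes on `D`, `A(D) ⊆ Dᗮ`. Otherwise pick `X₀, Z₀ ∈ D`
with `c = ⟪A X₀, Z₀⟫ ≠ 0`; Gauss invariance with `Y = X₀`, `Z = Z₀` gives
`c • A X - ⟪A X, Z₀⟫ • A X₀ ∈ D`, so everything reduces to `A X₀ ∈ D`. If that failed, take
`X₁ ≠ 0` in `D` with `⟪A X₁, Z₀⟫ = 0` (possible as `dim D > 1`): then `A X₁ ∈ D`, and Gauss
invariance with `X = X₁`, `Y = X₀` forces `⟪A X₁, Z⟫ = 0` for all `Z ∈ D`, in particular for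
`Z = A X₁`, so `A X₁ = 0`, against injectivity.
-/

theorem Submodule.exists_mem_ne_zero_apply_eq_zero {K V : Type*} [Field K] [AddCommGroup V]
    [Module K V] (D : Submodule K V) (hD : 1 < Module.finrank K D) (f : V →ₗ[K] K) :
    ∃ x ∈ D, x ≠ 0 ∧ f x = 0 := by
  have : FiniteDimensional K D := Module.finite_of_finrank_pos (by omega)
  obtain ⟨x, hx, hne⟩ := (Submodule.ne_bot_iff _).1
    ((f.domRestrict D).ker_ne_bot_of_finrank_lt (by rwa [Module.finrank_self]))
  exact ⟨x, x.2, by simpa using hne, hx⟩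

section GaussInvariant

variable {E : Type*} [NormedAddCommGroup E] [InnerProductSpace ℝ E]

def GaussInvariant (A : E →ₗ[ℝ] E) (D : Submodule ℝ E) : Prop :=
  ∀ X ∈ D, ∀ Y ∈ D, ∀ Z ∈ D, ⟪A Y, Z⟫ • A X - ⟪A X, Z⟫ • A Y ∈ D

variable {A : E →ₗ[ℝ] E} {D : Submodule ℝ E} {X₀ Z₀ X : E}

theorem GaussInvariant.apply_mem_of_smul_mem (hG : GaussInvariant A D) (hX₀ : X₀ ∈ D)
    (hZ₀ : Z₀ ∈ D) (hc : ⟪A X₀, Z₀⟫ ≠ 0) (hX : X ∈ D) (h : ⟪A X, Z₀⟫ • A X₀ ∈ D) :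
    A X ∈ D :=
  (D.smul_mem_iff hc).1 ((D.sub_mem_iff_left h).1 (hG X hX X₀ hX₀ Z₀ hZ₀))

theorem GaussInvariant.apply_eq_zero_of_apply_mem (hG : GaussInvariant A D) (hX₀ : X₀ ∈ D)
    (hAX₀ : A X₀ ∉ D) (hX : X ∈ D) (hAX : A X ∈ D) : A X = 0 := by
  have horth : ∀ Z ∈ D, ⟪A X, Z⟫ = 0 := fun Z hZ => by
    by_contra hne
    exact hAX₀ ((D.smul_mem_iff hne).1
      ((D.sub_mem_iff_right (D.smul_mem _ hAX)).1 (hG X hX X₀ hX₀ Z hZ)))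
  exact inner_self_eq_zero.1 (horth _ hAX)

theorem GaussInvariant.apply_mem_of_inner_ne_zero (hG : GaussInvariant A D)
    (hinj : Function.Injective A) (hdim : 1 < Module.finrank ℝ D) (hX₀ : X₀ ∈ D)
    (hZ₀ : Z₀ ∈ D) (hc : ⟪A X₀, Z₀⟫ ≠ 0) : A X₀ ∈ D := by
  by_contra hAX₀
  obtain ⟨X₁, hX₁, hX₁ne, hX₁Z₀⟩ :=
    D.exists_mem_ne_zero_apply_eq_zero hdim ((innerₛₗ ℝ Z₀).comp A)
  rw [LinearMap.comp_apply, innerₛₗ_apply_apply, real_inner_comm] at hX₁Z₀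
  have hAX₁ : A X₁ ∈ D := hG.apply_mem_of_smul_mem hX₀ hZ₀ hc hX₁ (by simp [hX₁Z₀])
  exact hX₁ne (hinj (by rw [hG.apply_eq_zero_of_apply_mem hX₀ hAX₀ hX₁ hAX₁, map_zero]))

end GaussInvariant

theorem curvature_invariant_of_injective_general
    {E : Type*} [NormedAddCommGroup E] [InnerProductSpace ℝ E]
    (A : E →ₗ[ℝ] E)
    (hinj : Function.Injective A)
    (D : Submodule ℝ E) (hdim : 1 < Module.finrank ℝ D)
    (hGauss : ∀ X ∈ D, ∀ Y ∈ D, ∀ Z ∈ D,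
      ⟪A Y, Z⟫ • A X - ⟪A X, Z⟫ • A Y ∈ D) :
    (∀ x ∈ D, A x ∈ D) ∨ (∀ x ∈ D, A x ∈ Dᗮ) := by
  have hG : GaussInvariant A D := hGauss
  by_cases h : ∃ X₀ ∈ D, ∃ Z₀ ∈ D, ⟪A X₀, Z₀⟫ ≠ 0
  · obtain ⟨X₀, hX₀, Z₀, hZ₀, hc⟩ := h
    have hAX₀ : A X₀ ∈ D := hG.apply_mem_of_inner_ne_zero hinj hdim hX₀ hZ₀ hc
    exact Or.inl fun X hX => hG.apply_mem_of_smul_mem hX₀ hZ₀ hc hX (D.smul_mem _ hAX₀)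
  · push Not at h
    exact Or.inr fun X hX => (Submodule.mem_orthogonal' D _).2 (h X hX)

/-- If a subspace `D` with `dim D > 1` of a finite-dimensional real inner product
space is Gauss-invariant for an injective symmetric operator `A`, then
`A(D) ⊆ D` or `A(D) ⊆ D^⊥`. -/
theorem curvature_invariant_of_injective
    {E : Type*} [NormedAddCommGroup E] [InnerProductSpace ℝ E]
    [FiniteDimensional ℝ E] (A : E →ₗ[ℝ] E)
    (hA : ∀ u v : E, ⟪A u, v⟫ = ⟪u, A v⟫)
    (hinj : Function.Injective A)
    (D : Submodule ℝ E) (hdim : 1 < Module.finrank ℝ D)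
    (hGauss : ∀ X ∈ D, ∀ Y ∈ D, ∀ Z ∈ D,
      ⟪A Y, Z⟫ • A X - ⟪A X, Z⟫ • A Y ∈ D) :
    (∀ x ∈ D, A x ∈ D) ∨ (∀ x ∈ D, A x ∈ Dᗮ) :=
  curvature_invariant_of_injective_general A hinj D hdim hGauss
end

section
/- Let E be a finite-dimensional real inner product space, A : E → E a symmetric (self-adjoint) linear operator, and D ⊆ E a linear subspace satisfying the Gauss-invariance condition for A. Suppose X₁ ∈ D with ‖X₁‖ = 1 and that A X₁ − λ₁ X₁ ∈ D^⊥ for some real number λ₁ ≠ 0. Then A W ∈ D for every W ∈ D with ⟨W, X₁⟩ = 0. -/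
/-!
Gauss invariance with `X = W`, `Y = Z = X₁` puts `⟪A X₁, X₁⟫ • A W - ⟪A W, X₁⟫ • A X₁` in `D`.
Since `A X₁ ≡ λ₁ X₁` modulo `Dᗮ` and `A` is symmetric, the first coefficient is `λ₁ ≠ 0` and the
second is `λ₁ ⟪W, X₁⟫ = 0`.
-/

open scoped RealInnerProductSpace

namespace Submodule

variable {E : Type*} [NormedAddCommGroup E] [InnerProductSpace ℝ E]

def IsGaussInvariant (D : Submodule ℝ E) (A : E →ₗ[ℝ] E) : Prop :=
  ∀ X ∈ D, ∀ Y ∈ D, ∀ Z ∈ D, ⟪A Y, Z⟫ • A X - ⟪A X, Z⟫ • A Y ∈ D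

theorem inner_eq_mul_inner_of_sub_smul_mem_orthogonal {D : Submodule ℝ E} {V X W : E} {l : ℝ}
    (hV : V - l • X ∈ Dᗮ) (hW : W ∈ D) : ⟪W, V⟫ = l * ⟪W, X⟫ := by
  have h := (mem_orthogonal D _).1 hV W hW
  rwa [inner_sub_right, inner_smul_right, sub_eq_zero] at h

theorem IsGaussInvariant.apply_mem {D : Submodule ℝ E} {A : E →ₗ[ℝ] E}
    (hD : D.IsGaussInvariant A) {X W : E} (hX : X ∈ D) (hW : W ∈ D)
    (hAXX : ⟪A X, X⟫ ≠ 0) (hAWX : ⟪A W, X⟫ = 0) : A W ∈ D := by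
  have h := hD W hW X hX X hX
  rwa [hAWX, zero_smul, sub_zero, D.smul_mem_iff hAXX] at h

end Submodule

theorem gauss_invariant_image_in_D_general
    {E : Type*} [NormedAddCommGroup E] [InnerProductSpace ℝ E]
    (A : E →ₗ[ℝ] E)
    (hA : ∀ u v : E, ⟪A u, v⟫ = ⟪u, A v⟫)
    (D : Submodule ℝ E)
    (hGauss : ∀ X ∈ D, ∀ Y ∈ D, ∀ Z ∈ D,
      ⟪A Y, Z⟫ • A X - ⟪A X, Z⟫ • A Y ∈ D)
    (X₁ : E) (hX₁ : X₁ ∈ D) (hX₁norm : ‖X₁‖ = 1)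
    (l₁ : ℝ) (hl₁ : l₁ ≠ 0) (hV₁ : A X₁ - l₁ • X₁ ∈ Dᗮ) :
    ∀ W ∈ D, ⟪W, X₁⟫ = 0 → A W ∈ D := by
  intro W hW hWX
  have hAX₁X₁ : ⟪A X₁, X₁⟫ = l₁ := by
    rw [real_inner_comm, Submodule.inner_eq_mul_inner_of_sub_smul_mem_orthogonal hV₁ hX₁,
      real_inner_self_eq_norm_sq, hX₁norm, one_pow, mul_one]
  have hAWX₁ : ⟪A W, X₁⟫ = 0 := by
    rw [hA, Submodule.inner_eq_mul_inner_of_sub_smul_mem_orthogonal hV₁ hW, hWX, mul_zero]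
  exact Submodule.IsGaussInvariant.apply_mem hGauss hX₁ hW (hAX₁X₁ ▸ hl₁) hAWX₁

/-- If `D` is Gauss-invariant for a symmetric operator `A`, `X₁ ∈ D` is a unit vector
with `A X₁ - λ₁ X₁ ∈ D^⊥` and `λ₁ ≠ 0`, then `A W ∈ D` for every `W ∈ D`
orthogonal to `X₁`. -/
theorem gauss_invariant_image_in_D
    {E : Type*} [NormedAddCommGroup E] [InnerProductSpace ℝ E]
    [FiniteDimensional ℝ E] (A : E →ₗ[ℝ] E)
    (hA : ∀ u v : E, ⟪A u, v⟫ = ⟪u, A v⟫)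
    (D : Submodule ℝ E)
    (hGauss : ∀ X ∈ D, ∀ Y ∈ D, ∀ Z ∈ D,
      ⟪A Y, Z⟫ • A X - ⟪A X, Z⟫ • A Y ∈ D)
    (X₁ : E) (hX₁ : X₁ ∈ D) (hX₁norm : ‖X₁‖ = 1)
    (l₁ : ℝ) (hl₁ : l₁ ≠ 0) (hV₁ : A X₁ - l₁ • X₁ ∈ Dᗮ) :
    ∀ W ∈ D, ⟪W, X₁⟫ = 0 → A W ∈ D :=
  gauss_invariant_image_in_D_general A hA D hGauss X₁ hX₁ hX₁norm l₁ hl₁ hV₁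
end

section
/- Let E be a finite-dimensional real inner product space, A : E → E a symmetric (self-adjoint) linear operator, and D ⊆ E a linear subspace satisfying the Gauss-invariance condition for A. Suppose X₁ ∈ D with ‖X₁‖ = 1, that A X₁ − λ₁ X₁ ∈ D^⊥ for some real number λ₁ ≠ 0, and that A X₁ ∉ D. Then ⟨A W, W⟩ = 0 for every W ∈ D with ⟨W, X₁⟩ = 0. -/
open scoped RealInnerProductSpace

section

variable {E : Type*} [NormedAddCommGroup E] [InnerProductSpace ℝ E]

theorem inner_eq_zero_of_sub_smul_mem_orthogonal {K : Submodule ℝ E} {x y w : E} {l : ℝ}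
    (h : y - l • x ∈ Kᗮ) (hw : w ∈ K) (hxw : ⟪x, w⟫ = 0) : ⟪y, w⟫ = 0 := by
  have hperp : ⟪y - l • x, w⟫ = 0 := Submodule.inner_left_of_mem_orthogonal hw h
  rwa [inner_sub_left, real_inner_smul_left, hxw, mul_zero, sub_zero] at hperp

/-- Taking `X = Z = W` in the Gauss-invariance condition leaves `-⟪A W, W⟫ • A Y ∈ D`. -/
theorem inner_apply_self_eq_zero_of_gauss {A : E →ₗ[ℝ] E} {D : Submodule ℝ E}
    (hGauss : ∀ X ∈ D, ∀ Y ∈ D, ∀ Z ∈ D, ⟪A Y, Z⟫ • A X - ⟪A X, Z⟫ • A Y ∈ D)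
    {Y W : E} (hY : Y ∈ D) (hW : W ∈ D) (hAY : A Y ∉ D) (hYW : ⟪A Y, W⟫ = 0) :
    ⟪A W, W⟫ = 0 := by
  have hmem := D.neg_mem (hGauss W hW Y hY W hW)
  rw [hYW, zero_smul, zero_sub, neg_neg] at hmem
  by_contra hne
  exact hAY ((D.smul_mem_iff hne).mp hmem)

end

theorem gauss_invariant_isotropic_general
    {E : Type*} [NormedAddCommGroup E] [InnerProductSpace ℝ E]
    (A : E →ₗ[ℝ] E)
    (D : Submodule ℝ E)
    (hGauss : ∀ X ∈ D, ∀ Y ∈ D, ∀ Z ∈ D,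
      ⟪A Y, Z⟫ • A X - ⟪A X, Z⟫ • A Y ∈ D)
    (X₁ : E) (hX₁ : X₁ ∈ D)
    (l₁ : ℝ) (hV₁ : A X₁ - l₁ • X₁ ∈ Dᗮ)
    (hAX₁ : A X₁ ∉ D) :
    ∀ W ∈ D, ⟪W, X₁⟫ = 0 → ⟪A W, W⟫ = 0 := by
  intro W hW hWX₁
  have hAX₁W : ⟪A X₁, W⟫ = 0 :=
    inner_eq_zero_of_sub_smul_mem_orthogonal hV₁ hW (by rwa [real_inner_comm])
  exact inner_apply_self_eq_zero_of_gauss hGauss hX₁ hW hAX₁ hAX₁W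

/-- If `D` is Gauss-invariant for a symmetric operator `A`, `X₁ ∈ D` is a unit vector
with `A X₁ - λ₁ X₁ ∈ D^⊥`, `λ₁ ≠ 0`, and `A X₁ ∉ D`, then `⟪A W, W⟫ = 0` for every
`W ∈ D` orthogonal to `X₁`. -/
theorem gauss_invariant_isotropic
    {E : Type*} [NormedAddCommGroup E] [InnerProductSpace ℝ E]
    [FiniteDimensional ℝ E] (A : E →ₗ[ℝ] E)
    (hA : ∀ u v : E, ⟪A u, v⟫ = ⟪u, A v⟫)
    (D : Submodule ℝ E)
    (hGauss : ∀ X ∈ D, ∀ Y ∈ D, ∀ Z ∈ D,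
      ⟪A Y, Z⟫ • A X - ⟪A X, Z⟫ • A Y ∈ D)
    (X₁ : E) (hX₁ : X₁ ∈ D) (hX₁norm : ‖X₁‖ = 1)
    (l₁ : ℝ) (hl₁ : l₁ ≠ 0) (hV₁ : A X₁ - l₁ • X₁ ∈ Dᗮ)
    (hAX₁ : A X₁ ∉ D) :
    ∀ W ∈ D, ⟪W, X₁⟫ = 0 → ⟪A W, W⟫ = 0 :=
  gauss_invariant_isotropic_general A D hGauss X₁ hX₁ l₁ hV₁ hAX₁
end

section
/- Let I ⊆ ℝ be an open interval, γ : I → ℝ^N twice differentiable with ‖γ'(s)‖ = 1 for all s ∈ I, and let ξ₁, …, ξ_m : I → ℝ^N be differentiable maps such that for all s ∈ I: the vectors ξ₁(s), …, ξ_m(s) are orthonormal, ⟨ξ_i(s), γ'(s)⟩ = 0, and ξ_i'(s) ∈ ℝ·γ'(s). Define F : I × ℝ^m → ℝ^N by F(s, y) = γ(s) + Σ_{i=1}^m y_i ξ_i(s). Then the total derivative of F at a point (s, y), as a linear map ℝ × ℝ^m → ℝ^N, is injective if and only if ⟨γ''(s), Σ_{i=1}^m y_i ξ_i(s)⟩ ≠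 1. (Hence F is an immersion precisely on I × Ω, where Ω = {y ∈ ℝ^m : ⟨γ''(s), Σ_i y_i ξ_i(s)⟩ ≠ 1 for all s ∈ I}.) -/
/-!
Differentiating `⟪ξᵢ, γ'⟫ = 0` shows that the tangential derivative `ξᵢ' = cᵢ γ'` has
`cᵢ = -⟪ξᵢ, γ''⟫`. Hence `dF(u, v) = u (1 - ⟪γ'', ∑ yᵢ ξᵢ⟫) γ' + ∑ vᵢ ξᵢ`, and since
`γ', ξ₁, …, ξₘ` are orthonormal, `dF` is injective exactly when the coefficient of `γ'` is
nonzero.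
-/

open Filter Topology
open scoped RealInnerProductSpace

theorem HasFDerivAt.tube_apply {E : Type*} [NormedAddCommGroup E] [NormedSpace ℝ E]
    {ι : Type*} [Fintype ι] {γ : ℝ → E} {ξ : ι → ℝ → E} {γ's : E} {ξ's : ι → E} {s : ℝ}
    {y : ι → ℝ} {D : (ℝ × (ι → ℝ)) →L[ℝ] E}
    (hγ : HasDerivAt γ γ's s) (hξ : ∀ i, HasDerivAt (ξ i) (ξ's i) s)
    (hD : HasFDerivAt (fun p : ℝ × (ι → ℝ) => γ p.1 + ∑ i, p.2 i • ξ i p.1) D (s, y))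
    (u : ℝ) (v : ι → ℝ) :
    D (u, v) = u • (γ's + ∑ i, y i • ξ's i) + ∑ i, v i • ξ i s := by
  -- `D (u, v)` is the derivative at `0` of `F` along the line `t ↦ (s, y) + t • (u, v)`.
  have hline : HasDerivAt (fun t : ℝ => (s, y) + t • (u, v)) (u, v) 0 := by
    simpa using ((hasDerivAt_id (0 : ℝ)).smul_const (u, v)).const_add (s, y)
  have hcomp := (by simpa using hD : HasFDerivAt _ D ((s, y) + (0 : ℝ) • (u, v))).comp_hasDerivAt
    0 hline
  have hs : HasDerivAt (fun t : ℝ => s + t * u) u 0 := by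
    simpa using ((hasDerivAt_id (0 : ℝ)).mul_const u).const_add s
  have hdirect : HasDerivAt (fun t : ℝ => γ (s + t * u) + ∑ i, (y i + t * v i) • ξ i (s + t * u))
      (u • (γ's + ∑ i, y i • ξ's i) + ∑ i, v i • ξ i s) 0 := by
    have hγu : HasDerivAt (fun t : ℝ => γ (s + t * u)) (u • γ's) 0 :=
      HasDerivAt.scomp (g₁ := γ) 0 (by simpa using hγ) hs
    have hξu : ∀ i, HasDerivAt (fun t : ℝ => (y i + t * v i) • ξ i (s + t * u))
        (y i • u • ξ's i + v i • ξ i s) 0 := fun i => by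
      have hc : HasDerivAt (fun t : ℝ => y i + t * v i) (v i) 0 := by
        simpa using ((hasDerivAt_id (0 : ℝ)).mul_const (v i)).const_add (y i)
      simpa using hc.fun_smul (HasDerivAt.scomp (g₁ := ξ i) 0 (by simpa using hξ i) hs)
    convert hγu.fun_add (HasDerivAt.fun_sum (u := Finset.univ) fun i _ => hξu i) using 1
    rw [Finset.sum_add_distrib, smul_add, Finset.smul_sum]
    simp only [smul_comm u]
    abel
  refine hcomp.unique ?_
  convert hdirect using 2 with t
  simp

section InnerProductSpace

variable {E : Type*} [NormedAddCommGroup E] [InnerProductSpace ℝ E]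

theorem HasDerivAt.inner_eq_neg_of_eventually_inner_eq_zero {f g : ℝ → E} {f' g' : E} {s : ℝ}
    (hf : HasDerivAt f f' s) (hg : HasDerivAt g g' s) (h : ∀ᶠ t in 𝓝 s, ⟪f t, g t⟫ = 0) :
    ⟪f', g s⟫ = -⟪f s, g'⟫ := by
  have hzero : HasDerivAt (fun t => ⟪f t, g t⟫) 0 s :=
    (hasDerivAt_const s (0 : ℝ)).congr_of_eventuallyEq h
  linarith [(hf.inner ℝ hg).unique hzero]

theorem deriv_eq_neg_inner_smul_of_normal_of_parallel {ξ γ' : ℝ → E} {ξ's γ''s : E} {s c : ℝ}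
    (hξ : HasDerivAt ξ ξ's s) (hγ' : HasDerivAt γ' γ''s s) (hunit : ‖γ' s‖ = 1)
    (hnormal : ∀ᶠ t in 𝓝 s, ⟪ξ t, γ' t⟫ = 0) (hpar : ξ's = c • γ' s) :
    ξ's = -⟪ξ s, γ''s⟫ • γ' s := by
  have hc : c = ⟪ξ's, γ' s⟫ := by
    rw [hpar, real_inner_smul_left, real_inner_self_eq_norm_sq, hunit]; ring
  rw [← hξ.inner_eq_neg_of_eventually_inner_eq_zero hγ' hnormal, ← hc, hpar]

theorem injective_iff_ne_zero_of_apply_eq {ι : Type*} [Fintype ι] {e : ι → E} {w : E}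
    (he : Orthonormal ℝ e) (hw : ∀ i, ⟪w, e i⟫ = 0) {L : (ℝ × (ι → ℝ)) →ₗ[ℝ] E}
    (hL : ∀ u v, L (u, v) = u • w + ∑ i, v i • e i) :
    Function.Injective L ↔ w ≠ 0 := by
  constructor
  · rintro hinj rfl
    have := @hinj (1, 0) 0
    simp [hL] at this
  · intro hw0
    rw [injective_iff_map_eq_zero]
    rintro ⟨u, v⟩ h0
    rw [hL] at h0
    have hu : u = 0 := by
      have h1 := congrArg (⟪w, ·⟫) h0
      simp only [inner_add_right, inner_sum, real_inner_smul_right, hw, mul_zero,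
        Finset.sum_const_zero, add_zero, inner_zero_right] at h1
      simpa [real_inner_self_eq_norm_sq, hw0] using h1
    subst hu
    have hv := Fintype.linearIndependent_iff.1 he.linearIndependent v (by simpa using h0)
    simp only [Prod.mk_eq_zero, true_and]
    exact funext hv

end InnerProductSpace

/-- The partial tube parametrization `F(s,y) = γ(s) + ∑ yᵢ ξᵢ(s)` over a unit speed
curve with a parallel orthonormal normal frame is an immersion at `(s, y)` (i.e. its
total derivative there is injective) if and only if `⟪γ''(s), ∑ yᵢ ξᵢ(s)⟫ ≠ 1`. -/
theorem partial_tube_immersion_iff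
    {N m : ℕ} (a b : ℝ)
    (γ γ' γ'' : ℝ → EuclideanSpace ℝ (Fin N))
    (ξ ξ' : Fin m → ℝ → EuclideanSpace ℝ (Fin N))
    (hγ : ∀ s ∈ Set.Ioo a b, HasDerivAt γ (γ' s) s)
    (hγ' : ∀ s ∈ Set.Ioo a b, HasDerivAt γ' (γ'' s) s)
    (hunit : ∀ s ∈ Set.Ioo a b, ‖γ' s‖ = 1)
    (horth : ∀ i j, ∀ s ∈ Set.Ioo a b,
      ⟪ξ i s, ξ j s⟫ = if i = j then (1 : ℝ) else 0)
    (hξ : ∀ i, ∀ s ∈ Set.Ioo a b, HasDerivAt (ξ i) (ξ' i s) s)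
    (hnormal : ∀ i, ∀ s ∈ Set.Ioo a b, ⟪ξ i s, γ' s⟫ = 0)
    (hpar : ∀ i, ∀ s ∈ Set.Ioo a b, ∃ c : ℝ, ξ' i s = c • γ' s) :
    ∀ s ∈ Set.Ioo a b, ∀ y : Fin m → ℝ,
      ∀ Dp : (ℝ × (Fin m → ℝ)) →L[ℝ] EuclideanSpace ℝ (Fin N),
        HasFDerivAt (fun p : ℝ × (Fin m → ℝ) =>
            γ p.1 + ∑ i, p.2 i • ξ i p.1) Dp (s, y) →
          (Function.Injective Dp ↔ ⟪γ'' s, ∑ i, y i • ξ i s⟫ ≠ 1) := by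
  intro s hs y Dp hDp
  have hξ' : ∀ i, ξ' i s = -⟪ξ i s, γ'' s⟫ • γ' s := fun i =>
    have ⟨_, hc⟩ := hpar i s hs
    deriv_eq_neg_inner_smul_of_normal_of_parallel (hξ i s hs) (hγ' s hs) (hunit s hs)
      (eventually_of_mem (Ioo_mem_nhds hs.1 hs.2) (hnormal i)) hc
  have hspeed : γ' s + ∑ i, y i • ξ' i s = (1 - ⟪γ'' s, ∑ i, y i • ξ i s⟫) • γ' s := by
    simp only [hξ', smul_smul, inner_sum, real_inner_smul_right, sub_smul, Finset.sum_smul,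
      real_inner_comm (γ'' s)]
    simp [sub_eq_add_neg]
  have hDp_apply : ∀ u v, Dp (u, v) =
      u • ((1 - ⟪γ'' s, ∑ i, y i • ξ i s⟫) • γ' s) + ∑ i, v i • ξ i s := fun u v => by
    rw [← hspeed, hDp.tube_apply (hγ s hs) (fun i => hξ i s hs)]
  have hγ'_ne : γ' s ≠ 0 := by simp [← norm_ne_zero_iff, hunit s hs]
  calc Function.Injective Dp ↔ (1 - ⟪γ'' s, ∑ i, y i • ξ i s⟫) • γ' s ≠ 0 :=
        injective_iff_ne_zero_of_apply_eq (L := Dp.toLinearMap)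
          (orthonormal_iff_ite.2 fun i j => horth i j s hs)
          (fun i => by rw [real_inner_smul_left, real_inner_comm (ξ i s), hnormal i s hs, mul_zero])
          hDp_apply
    _ ↔ ⟪γ'' s, ∑ i, y i • ξ i s⟫ ≠ 1 := by
        rw [smul_ne_zero_iff, sub_ne_zero, ne_comm, and_iff_left hγ'_ne]
end
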